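/- Let φ ∈ [0,1) and let f : ℕ → ℝ be such that ∑_{n≥1} |Δ²f(n)| < ∞, so that Δf(n) → ψ ∈ ℝ as n → ∞. If ψ + φ ∉ ℤ and yₙ = e(f(n)) for n ≥ 1, then every solution of the difference equation x_{n+1} = e(−φ)·xₙ + yₙ (n ≥ 1) is bounded, i.e. {e(f(n))}_{n≥1} ∈ 𝕎_φ. -/

import Mathlib

/-!
With `u m = e((m+1)φ) x (m+1)` the recurrence becomes `u (m+1) = u m + b m`, where
`b m = e(f(m+1) + (m+2)φ)`, so it suffices to bound the partial sums of `b`. Its consecutive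
ratios `z m = e(Δf(m+1) + φ)` tend to `e(ψ+φ) ≠ 1` and have summable variation, since `Δ²f` is
absolutely summable. Abel summation with the eventually bounded `a m = (z m - 1)⁻¹` writes
`b m = Δ(b a)(m) - b (m+1) Δa(m)`: a telescoping term with bounded summand plus an absolutely
summable one.
-/

open Filter

noncomputable def e (x : ℝ) : ℂ := Complex.exp (2 * Real.pi * Complex.I * x)

/-- `𝕎_φ`: the set of sequences `{yₙ}` such that every solution of
`x_{n+1} = e(−φ)xₙ + yₙ` (n ≥ 1) is bounded. -/
def memW (φ : ℝ) (y : ℕ → ℂ) : Prop :=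
  ∀ x : ℕ → ℂ, (∀ n, 1 ≤ n → x (n + 1) = e (-φ) * x n + y n) →
    ∃ C : ℝ, ∀ n, 1 ≤ n → ‖x n‖ ≤ C

open Finset

lemma e_eq_exp_I_mul (x : ℝ) : e x = Complex.exp (Complex.I * ↑(2 * Real.pi * x)) := by
  rw [e]; push_cast; ring_nf

lemma norm_e (x : ℝ) : ‖e x‖ = 1 := by
  rw [e_eq_exp_I_mul, Complex.norm_exp_I_mul_ofReal]

lemma e_add (x y : ℝ) : e (x + y) = e x * e y := by
  simp only [e, ← Complex.exp_add]
  push_cast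
  ring_nf

lemma continuous_e : Continuous e := by
  unfold e; fun_prop

lemma e_ne_one {θ : ℝ} (h : ∀ m : ℤ, θ ≠ m) : e θ ≠ 1 := by
  intro h1
  obtain ⟨m, hm⟩ := Complex.exp_eq_one_iff.mp h1
  apply h m
  have : (θ : ℂ) = m := by
    have hπ : (2 * Real.pi * Complex.I : ℂ) ≠ 0 := by simp [Real.pi_ne_zero]
    apply mul_left_cancel₀ hπ
    linear_combination hm
  exact_mod_cast this

lemma norm_e_sub_e_le (s t : ℝ) : ‖e s - e t‖ ≤ 2 * Real.pi * |s - t| := by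
  have hs : e s = e (s - t) * e t := by rw [← e_add, sub_add_cancel]
  rw [hs, ← sub_one_mul, norm_mul, norm_e, mul_one, e_eq_exp_I_mul]
  refine (Real.norm_exp_I_mul_ofReal_sub_one_le).trans_eq ?_
  rw [Real.norm_eq_abs, abs_mul, abs_of_pos Real.two_pi_pos]

section PartialSums

variable {E : Type*} [SeminormedAddCommGroup E]

lemma exists_norm_sum_range_le_of_eq_sub_add {b c r : ℕ → E}
    (hb : ∀ m, b m = c (m + 1) - c m + r m) {B : ℝ} (hc : ∀ m, ‖c m‖ ≤ B)
    (hr : Summable fun m => ‖r m‖) :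
    ∃ C, ∀ n, ‖∑ k ∈ range n, b k‖ ≤ C := by
  refine ⟨2 * B + ∑' m, ‖r m‖, fun n => ?_⟩
  rw [sum_congr rfl fun k _ => hb k, sum_add_distrib, sum_range_sub]
  calc ‖c n - c 0 + ∑ k ∈ range n, r k‖
      ≤ ‖c n‖ + ‖c 0‖ + ∑ k ∈ range n, ‖r k‖ :=
        (norm_add_le _ _).trans (add_le_add (norm_sub_le _ _) (norm_sum_le _ _))
    _ ≤ 2 * B + ∑' m, ‖r m‖ := by
        linarith [hc n, hc 0, hr.sum_le_tsum (range n) fun m _ => norm_nonneg (r m)]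

lemma exists_norm_sum_range_le_of_nat_add {b : ℕ → E} (N : ℕ)
    (h : ∃ C, ∀ n, ‖∑ k ∈ range n, b (N + k)‖ ≤ C) :
    ∃ C, ∀ n, ‖∑ k ∈ range n, b k‖ ≤ C := by
  obtain ⟨C, hC⟩ := h
  refine ⟨∑ k ∈ range N, ‖b k‖ + C, fun n => ?_⟩
  rcases le_or_gt n N with hn | hn
  · calc ‖∑ k ∈ range n, b k‖ ≤ ∑ k ∈ range n, ‖b k‖ := norm_sum_le _ _
      _ ≤ ∑ k ∈ range N, ‖b k‖ :=
          sum_le_sum_of_subset_of_nonneg (range_subset_range.mpr hn) fun _ _ _ => norm_nonneg _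
      _ ≤ _ := le_add_of_nonneg_right ((norm_nonneg _).trans (hC 0))
  · obtain ⟨j, rfl⟩ := Nat.exists_eq_add_of_le hn.le
    rw [sum_range_add]
    exact (norm_add_le _ _).trans (add_le_add (norm_sum_le _ _) (hC j))

end PartialSums

lemma exists_norm_sum_range_le_of_mul_ratio_of_norm_inv_le {b z : ℕ → ℂ}
    (hbz : ∀ m, b (m + 1) = b m * z m) {B K : ℝ} (hb : ∀ m, ‖b m‖ ≤ B)
    (hz : ∀ m, z m ≠ 1) (hK : ∀ m, ‖(z m - 1)⁻¹‖ ≤ K)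
    (hvar : Summable fun m => ‖z (m + 1) - z m‖) :
    ∃ C, ∀ n, ‖∑ k ∈ range n, b k‖ ≤ C := by
  set a : ℕ → ℂ := fun m => (z m - 1)⁻¹
  have hB : 0 ≤ B := (norm_nonneg _).trans (hb 0)
  have hK0 : 0 ≤ K := (norm_nonneg _).trans (hK 0)
  have ha_sub : ∀ m, a (m + 1) - a m = (z m - z (m + 1)) * (a m * a (m + 1)) := fun m => by
    have h₀ := sub_ne_zero.mpr (hz m)
    have h₁ := sub_ne_zero.mpr (hz (m + 1))
    simp only [a]
    field_simp
    ring
  refine exists_norm_sum_range_le_of_eq_sub_add (c := fun m => b m * a m)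
    (r := fun m => -(b (m + 1) * (a (m + 1) - a m))) (fun m => ?_)
    (fun m => (norm_mul_le _ _).trans (mul_le_mul (hb m) (hK m) (norm_nonneg _) hB))
    (hvar.mul_left (B * (K * K)) |>.of_nonneg_of_le (fun _ => norm_nonneg _) fun m => ?_)
  · calc b m = b m * (z m - 1) * a m := by
          simp only [a, mul_assoc, mul_inv_cancel₀ (sub_ne_zero.mpr (hz m)), mul_one]
      _ = _ := by rw [hbz]; ring
  · rw [norm_neg, norm_mul, ha_sub, norm_mul, norm_sub_rev, norm_mul]
    calc ‖b (m + 1)‖ * (‖z (m + 1) - z m‖ * (‖a m‖ * ‖a (m + 1)‖))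
        ≤ B * (‖z (m + 1) - z m‖ * (K * K)) := by
          gcongr
          exacts [hb _, hK _, hK _]
      _ = B * (K * K) * ‖z (m + 1) - z m‖ := by ring

/-- A discrete form of the Kuzmin–Landau inequality. -/
lemma exists_norm_sum_range_le_of_mul_ratio {b z : ℕ → ℂ} {w : ℂ}
    (hbz : ∀ m, b (m + 1) = b m * z m) {B : ℝ} (hb : ∀ m, ‖b m‖ ≤ B)
    (hzw : Tendsto z atTop (nhds w)) (hw : w ≠ 1)
    (hvar : Summable fun m => ‖z (m + 1) - z m‖) :
    ∃ C, ∀ n, ‖∑ k ∈ range n, b k‖ ≤ C := by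
  have hw₁ : 0 < ‖w - 1‖ := norm_pos_iff.mpr (sub_ne_zero.mpr hw)
  obtain ⟨N, hN⟩ := eventually_atTop.mp <|
    (hzw.sub_const 1).norm.eventually_const_le (half_lt_self hw₁)
  have hzN : ∀ m, z (N + m) ≠ 1 := fun m =>
    sub_ne_zero.mp (norm_pos_iff.mp ((half_pos hw₁).trans_le (hN _ (Nat.le_add_right N m))))
  apply exists_norm_sum_range_le_of_nat_add N
  refine exists_norm_sum_range_le_of_mul_ratio_of_norm_inv_le (z := fun m => z (N + m))
    (B := B) (K := (‖w - 1‖ / 2)⁻¹) (fun m => hbz (N + m)) (fun m => hb _)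
    hzN (fun m => ?_)
    (((summable_nat_add_iff N).mpr hvar).congr fun m => by ring_nf)
  rw [norm_inv]
  exact inv_anti₀ (half_pos hw₁) (hN _ (Nat.le_add_right N m))

lemma memW_of_exists_norm_sum_range_le {φ : ℝ} {y : ℕ → ℂ}
    (h : ∃ C, ∀ n, ‖∑ k ∈ range n, e ((k + 2) * φ) * y (k + 1)‖ ≤ C) : memW φ y := by
  intro x hx
  obtain ⟨C, hC⟩ := h
  set u : ℕ → ℂ := fun m => e ((m + 1) * φ) * x (m + 1)
  have hu : ∀ m, u m = u 0 + ∑ k ∈ range m, e ((k + 2) * φ) * y (k + 1) := by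
    intro m
    induction m with
    | zero => simp
    | succ m ih =>
      rw [sum_range_succ, ← add_assoc, ← ih]
      simp only [u, hx (m + 1) (Nat.le_add_left 1 m), mul_add, ← mul_assoc, ← e_add]
      push_cast
      ring_nf
  refine ⟨‖u 0‖ + C, fun n hn => ?_⟩
  obtain ⟨m, rfl⟩ := Nat.exists_eq_add_of_le' hn
  calc ‖x (m + 1)‖ = ‖u m‖ := by simp only [u, norm_mul, norm_e, one_mul]
    _ ≤ ‖u 0‖ + C := by rw [hu]; exact (norm_add_le _ _).trans (add_le_add le_rfl (hC m))

theorem stmt_11_general (φ : ℝ) (f : ℕ → ℝ)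
    (hsum : Summable fun n : ℕ => |f (n + 1 + 2) - 2 * f (n + 1 + 1) + f (n + 1)|)
    (ψ : ℝ) (hψ : Tendsto (fun n : ℕ => f (n + 1) - f n) atTop (nhds ψ))
    (hnonint : ∀ m : ℤ, ψ + φ ≠ (m : ℝ)) :
    memW φ (fun n => e (f n)) := by
  set d : ℕ → ℝ := fun m => f (m + 1 + 1) - f (m + 1) + φ
  set b : ℕ → ℂ := fun m => e (f (m + 1) + (m + 2) * φ)
  have hbd : ∀ m, b (m + 1) = b m * e (d m) := fun m => by
    simp only [b, d, ← e_add]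
    push_cast
    ring_nf
  have hd : Tendsto d atTop (nhds (ψ + φ)) :=
    (hψ.comp (tendsto_add_atTop_nat 1)).add_const φ
  have hvar : Summable fun m => ‖e (d (m + 1)) - e (d m)‖ :=
    (hsum.mul_left (2 * Real.pi)).of_nonneg_of_le (fun _ => norm_nonneg _) fun m =>
      (norm_e_sub_e_le _ _).trans_eq (by simp only [d]; ring_nf)
  obtain ⟨C, hC⟩ := exists_norm_sum_range_le_of_mul_ratio hbd (fun m => (norm_e _).le)
    ((continuous_e.tendsto _).comp hd) (e_ne_one hnonint) hvar
  refine memW_of_exists_norm_sum_range_le ⟨C, fun n => ?_⟩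
  simpa only [b, ← e_add, add_comm] using hC n

/-- if `∑_{n≥1} |Δ²f(n)| < ∞`, `Δf(n) → ψ`, and `ψ + φ ∉ ℤ`, then
`{e(f(n))}_{n≥1} ∈ 𝕎_φ`. -/
theorem stmt_11 (φ : ℝ) (hφ0 : 0 ≤ φ) (hφ1 : φ < 1) (f : ℕ → ℝ)
    (hsum : Summable fun n : ℕ => |f (n + 1 + 2) - 2 * f (n + 1 + 1) + f (n + 1)|)
    (ψ : ℝ) (hψ : Tendsto (fun n : ℕ => f (n + 1) - f n) atTop (nhds ψ))
    (hnonint : ∀ m : ℤ, ψ + φ ≠ (m : ℝ)) :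
    memW φ (fun n => e (f n)) :=
  stmt_11_general φ f hsum ψ hψ hnonint
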